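/- Let τ : [0,∞) → [0, τ̄] be measurable and v ∈ L²[0,∞) (extended by zero to negative times). Define w(t) := v(t - τ(t)) - v(t) and y(t) := ∫₀^t u(s) ds for u ∈ L²[0,∞), so that w = S(y) when v = y. Then ‖S ∘ ∫‖ ≤ τ̄: explicitly, if w(t) = y(t-τ(t)) - y(t) = -∫_{t-τ(t)}^{t} u(s) ds, then ∫₀^∞ w(t)² dt ≤ τ̄² ∫₀^∞ u(t)² dt. -/

import Mathlib

open MeasureTheory

/-!
By Cauchy–Schwarz, `(∫_{t-τ(t)}^t u)² ≤ τ̄ ∫_{t-τ̄}^t u²` for every `t`. Integrating in `t`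
and exchanging the order of integration (Tonelli): each point `s` lies in the window
`(t-τ̄, t]` for a set of `t` of length `τ̄`, so the double integral is `τ̄ ∫ u²`.
-/

open Set
open scoped ENNReal

theorem sq_setIntegral_le_measureReal_mul {α : Type*} [MeasurableSpace α] {μ : Measure α}
    {t : Set α} (ht : μ t ≠ ∞) {f : α → ℝ} (hf : IntegrableOn f t μ)
    (hf2 : IntegrableOn (fun x => f x ^ 2) t μ) :
    (∫ x in t, f x ∂μ) ^ 2 ≤ μ.real t * ∫ x in t, f x ^ 2 ∂μ := by
  rcases eq_or_ne (μ t) 0 with h0 | h0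
  · simp [Measure.restrict_eq_zero.mpr h0]
  have hpos : 0 < μ.real t := ENNReal.toReal_pos h0 ht
  have jensen := (even_two.convexOn_pow (𝕜 := ℝ)).map_set_average_le
    (continuous_pow 2).continuousOn isClosed_univ h0 ht (by simp) hf hf2
  simp only [setAverage_eq, smul_eq_mul, mul_pow] at jensen
  field_simp at jensen
  nlinarith

theorem sq_intervalIntegral_le {u : ℝ → ℝ} {a b : ℝ} (hab : a ≤ b)
    (hu : IntegrableOn (fun x => u x ^ 2) (Ioc a b)) :
    (∫ x in a..b, u x) ^ 2 ≤ (b - a) * ∫ x in Ioc a b, u x ^ 2 := by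
  by_cases hui : IntervalIntegrable u volume a b
  · rw [intervalIntegral.integral_of_le hab, ← Real.volume_real_Ioc_of_le hab]
    exact sq_setIntegral_le_measureReal_mul measure_Ioc_lt_top.ne hui.1 hu
  · rw [intervalIntegral.integral_undef hui, zero_pow two_ne_zero]
    exact mul_nonneg (sub_nonneg.mpr hab)
      (setIntegral_nonneg measurableSet_Ioc fun x _ => sq_nonneg _)

theorem sq_intervalIntegral_le_of_le {u : ℝ → ℝ} {c d t : ℝ} (hd : 0 ≤ d) (hdc : d ≤ c)
    (hu : IntegrableOn (fun x => u x ^ 2) (Ioc (t - c) t)) :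
    (∫ x in (t - d)..t, u x) ^ 2 ≤ c * ∫ x in Ioc (t - c) t, u x ^ 2 := by
  have hsub : Ioc (t - d) t ⊆ Ioc (t - c) t := Ioc_subset_Ioc_left (by linarith)
  calc (∫ x in (t - d)..t, u x) ^ 2 ≤ (t - (t - d)) * ∫ x in Ioc (t - d) t, u x ^ 2 :=
        sq_intervalIntegral_le (by linarith) (hu.mono_set hsub)
    _ ≤ c * ∫ x in Ioc (t - c) t, u x ^ 2 := by
        refine mul_le_mul (by linarith) ?_
          (setIntegral_nonneg measurableSet_Ioc fun x _ => sq_nonneg _) (hd.trans hdc)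
        exact setIntegral_mono_set hu (.of_forall fun x => sq_nonneg _) hsub.eventuallyLE

theorem lintegral_setLIntegral_Ioc_sub {f : ℝ → ℝ≥0∞} (hf : AEMeasurable f) (c : ℝ) :
    ∫⁻ t, ∫⁻ s in Ioc (t - c) t, f s = ENNReal.ofReal c * ∫⁻ s, f s := by
  set g := hf.mk f
  have hwindow : ∀ t, ∫⁻ s in Ioc (t - c) t, f s = ∫⁻ s, (Ioc (t - c) t).indicator g s :=
    fun t => by
      rw [lintegral_indicator measurableSet_Ioc]
      exact lintegral_congr_ae (ae_restrict_of_ae hf.ae_eq_mk)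
  have hswap : ∀ t s,
      (Ioc (t - c) t).indicator g s = (Ico s (s + c)).indicator (fun _ => g s) t :=
    fun t s => by
      simp only [indicator_apply, mem_Ioc, mem_Ico]
      congr 1
      exact propext ⟨fun h => ⟨h.2, by linarith⟩, fun h => ⟨by linarith, h.1⟩⟩
  have hmeas :
      Measurable (Function.uncurry fun t s => (Ico s (s + c)).indicator (fun _ => g s) t) := by
    change Measurable fun p : ℝ × ℝ => (Ico p.2 (p.2 + c)).indicator (fun _ => g p.2) p.1
    simp only [indicator_apply, mem_Ico]
    refine Measurable.ite ?_ (hf.measurable_mk.comp measurable_snd) measurable_const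
    exact (measurableSet_le measurable_snd measurable_fst).inter
      (measurableSet_lt measurable_fst (measurable_snd.add_const c))
  calc ∫⁻ t, ∫⁻ s in Ioc (t - c) t, f s
      = ∫⁻ s, ∫⁻ t, (Ico s (s + c)).indicator (fun _ => g s) t := by
        simp_rw [hwindow, hswap]
        exact lintegral_lintegral_swap hmeas.aemeasurable
    _ = ∫⁻ s, g s * ENNReal.ofReal c := by
        simp [lintegral_indicator_const measurableSet_Ico, Real.volume_Ico]
    _ = ENNReal.ofReal c * ∫⁻ s, f s := by
        rw [lintegral_mul_const _ hf.measurable_mk, mul_comm, lintegral_congr_ae hf.ae_eq_mk]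

theorem setIntegral_sq_intervalIntegral_le {u : ℝ → ℝ} (hu : Integrable fun x => u x ^ 2)
    {c : ℝ} (hc : 0 ≤ c) {τ : ℝ → ℝ} (hτ : ∀ t, τ t ∈ Icc 0 c) (S : Set ℝ) :
    ∫ t in S, (∫ x in (t - τ t)..t, u x) ^ 2 ≤ c ^ 2 * ∫ x, u x ^ 2 := by
  set U : ℝ → ℝ≥0∞ := fun x => ENNReal.ofReal (u x ^ 2)
  have hu_nonneg : 0 ≤ᵐ[volume] fun x => u x ^ 2 := .of_forall fun x => sq_nonneg _
  have hpointwise : ∀ t, ENNReal.ofReal ((∫ x in (t - τ t)..t, u x) ^ 2)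
      ≤ ENNReal.ofReal c * ∫⁻ x in Ioc (t - c) t, U x := fun t => by
    rw [← ofReal_integral_eq_lintegral_ofReal hu.integrableOn (ae_restrict_of_ae hu_nonneg),
      ← ENNReal.ofReal_mul hc]
    exact ENNReal.ofReal_le_ofReal
      (sq_intervalIntegral_le_of_le (hτ t).1 (hτ t).2 hu.integrableOn)
  by_cases hW : Integrable (fun t => (∫ x in (t - τ t)..t, u x) ^ 2) (volume.restrict S)
  swap
  · rw [integral_undef hW]
    positivity
  rw [integral_eq_lintegral_of_nonneg_ae (.of_forall fun t => sq_nonneg _) hW.1]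
  refine ENNReal.toReal_le_of_le_ofReal (by positivity) ?_
  calc ∫⁻ t in S, ENNReal.ofReal ((∫ x in (t - τ t)..t, u x) ^ 2)
      ≤ ∫⁻ t, ENNReal.ofReal c * ∫⁻ x in Ioc (t - c) t, U x :=
        (setLIntegral_le_lintegral _ _).trans (lintegral_mono hpointwise)
    _ = ENNReal.ofReal c * (ENNReal.ofReal c * ∫⁻ x, U x) := by
        rw [lintegral_const_mul' _ _ ENNReal.ofReal_ne_top,
          lintegral_setLIntegral_Ioc_sub hu.1.aemeasurable.ennreal_ofReal]
    _ = ENNReal.ofReal (c ^ 2 * ∫ x, u x ^ 2) := by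
        rw [← ofReal_integral_eq_lintegral_ofReal hu hu_nonneg, ← mul_assoc,
          ← ENNReal.ofReal_mul hc, ← ENNReal.ofReal_mul (by positivity), sq]

theorem delay_integrator_gain_bound_general (τbar : ℝ) (hτbar : 0 ≤ τbar)
    (τ : ℝ → ℝ)
    (hτ : ∀ t, τ t ∈ Set.Icc (0 : ℝ) τbar)
    (u : ℝ → ℝ) (hu0 : ∀ s < (0 : ℝ), u s = 0)
    (hu : Integrable (fun t => (u t) ^ 2) (volume.restrict (Set.Ioi (0 : ℝ)))) :
    (∫ t in Set.Ioi (0 : ℝ), (-(∫ s in (t - τ t)..t, u s)) ^ 2)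
      ≤ τbar ^ 2 * ∫ t in Set.Ioi (0 : ℝ), (u t) ^ 2 := by
  have hu_compl : ∀ s ∉ Ici (0 : ℝ), u s ^ 2 = 0 := fun s hs => by
    rw [hu0 s (not_le.mp hs), zero_pow two_ne_zero]
  have hu_int : Integrable fun t => u t ^ 2 :=
    (integrableOn_Ici_iff_integrableOn_Ioi (f := fun t => u t ^ 2) |>.mpr hu)
      |>.integrable_of_forall_notMem_eq_zero hu_compl
  rw [← integral_Ici_eq_integral_Ioi (f := fun t => u t ^ 2),
    setIntegral_eq_integral_of_forall_compl_eq_zero hu_compl]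
  simp_rw [neg_sq]
  exact setIntegral_sq_intervalIntegral_le hu_int hτbar hτ _

/-- Kao–Rantzer bound `‖S_{τ̄,r} ∘ 1/s‖ ≤ τ̄`: if `τ(t) ∈ [0, τ̄]` and
`w(t) = -∫_{t-τ(t)}^t u(s) ds` (with `u` extended by zero to negative times),
then `∫₀^∞ w(t)² dt ≤ τ̄² ∫₀^∞ u(t)² dt`. -/
theorem delay_integrator_gain_bound (τbar : ℝ) (hτbar : 0 ≤ τbar)
    (τ : ℝ → ℝ) (hτmeas : Measurable τ)
    (hτ : ∀ t, τ t ∈ Set.Icc (0 : ℝ) τbar)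
    (u : ℝ → ℝ) (hu0 : ∀ s < (0 : ℝ), u s = 0)
    (hu : Integrable (fun t => (u t) ^ 2) (volume.restrict (Set.Ioi (0 : ℝ)))) :
    (∫ t in Set.Ioi (0 : ℝ), (-(∫ s in (t - τ t)..t, u s)) ^ 2)
      ≤ τbar ^ 2 * ∫ t in Set.Ioi (0 : ℝ), (u t) ^ 2 :=
  delay_integrator_gain_bound_general τbar hτbar τ hτ u hu0 hu
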